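/- arXiv:2103.05268 — 3 statements merged into one kernel-verified Lean document; each statement's English description precedes it below -/
import Mathlib

section
/- Let E=ℓ², Σ a compact metric space, {θ_t}_{t∈ℝ} a group of homeomorphisms of Σ, and {U_σ(t,0)}_{t≥0,σ∈Σ} a continuous family of processes satisfying the translation property. Assume: (i) there is a bounded set B_0⊂E which is uniformly absorbing: for every bounded B⊂E there is t_0(B)≥0 with U_σ(t,0)B⊂B_0 for all t≥t_0(B) and all σ∈Σ; (ii) for every σ∈Σ, lim_{t→∞} lim_{M→∞} sup_{u∈B_0} Σ_{|m|>M} |(U_σ(t,0)u)_m|² = 0; (iii) the skew-product semigroup Ψ(t)(u,σ)=(U_σ(t,0)u, θ_t σ) has a global attractor 𝒜=⋃_{σ∈Σ}(A(σ)×{σ}) on E×Σ. Then for every ε>0 there exists a family of sets {𝒜_ε(σ)}_{σ∈Σ} with A(σ) ⊂ 𝒜_ε(σ) ⊂ 𝒩_ε(σ) for all σ∈Σ (where 𝒩_ε(σ) is the σ-section of the ε-neighborhood of 𝒜 in E×Σ), which is forward invariant: U_σ(t,0)𝒜_ε(σ) ⊂ 𝒜_ε(θ_t σ) for all t≥0 and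 σ∈Σ, and which uniformly forward attracts every bounded set B⊂E: lim_{t→∞} sup_{σ∈Σ} d_H(U_σ(t,0)B, 𝒜_ε(θ_t σ)) = 0. -/
noncomputable section

/-- `E = ℓ²`, the Hilbert space of square-summable real sequences indexed by `ℤ`. -/
abbrev ell2 : Type := lp (fun _ : ℤ => ℝ) 2

/-- Under the hypotheses: (i) a bounded uniformly absorbing set
`B₀ ⊆ E` exists; (ii) uniform asymptotic tail smallness of `U_σ(t,0)B₀`; (iii) the
skew-product semigroup has a global attractor `𝒜 = ⋃_σ (A(σ) × {σ})`; then for every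
`ε > 0` there exists a family `{𝒜_ε(σ)}` with `A(σ) ⊆ 𝒜_ε(σ) ⊆ 𝒩_ε(σ)` (the
`σ`-section of the `ε`-neighborhood of `𝒜`), forward invariant, which uniformly
forward attracts every bounded `B ⊆ E`. -/
theorem stmt_3 {S : Type*} [MetricSpace S] [CompactSpace S]
    (θ : ℝ → S → S)
    (hθcont : ∀ t, Continuous (θ t))
    (hθ0 : θ 0 = id)
    (hθadd : ∀ s r, θ (s + r) = θ s ∘ θ r)
    (U : S → ℝ → ℝ → ell2 → ell2)
    (hUid : ∀ σ τ, U σ τ τ = id)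
    (hUcomp : ∀ σ, ∀ τ s t : ℝ, τ ≤ s → s ≤ t → U σ t s ∘ U σ s τ = U σ t τ)
    (hUtrans : ∀ σ, ∀ s t τ : ℝ, τ ≤ t → U σ (t + s) (τ + s) = U (θ s σ) t τ)
    (hUcont : ∀ t : ℝ, 0 ≤ t → Continuous fun p : ell2 × S => U p.2 t 0 p.1)
    -- (i) a bounded uniformly absorbing set
    (B₀ : Set ell2) (hB₀bdd : Bornology.IsBounded B₀)
    (hB₀abs : ∀ B : Set ell2, Bornology.IsBounded B →
      ∃ t₀ : ℝ, 0 ≤ t₀ ∧ ∀ t ≥ t₀, ∀ σ : S, ∀ u ∈ B, U σ t 0 u ∈ B₀)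
    -- (ii) uniform smallness of tails:
    -- `lim_{t→∞} lim_{M→∞} sup_{u∈B₀} ∑_{|m|>M} |(U_σ(t,0)u)_m|² = 0`
    (htail : ∀ σ : S, ∀ η : ℝ, 0 < η → ∃ T : ℝ, ∀ t ≥ T, ∃ M₀ : ℕ, ∀ M : ℕ, M₀ ≤ M →
      ∀ u ∈ B₀, (∑' m : {m : ℤ // (M : ℤ) < |m|}, ((U σ t 0 u : ℤ → ℝ) m) ^ 2) ≤ η)
    -- (iii) `𝒜` is a global attractor of the skew-product semigroup `Ψ`
    (𝒜 : Set (ell2 × S))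
    (h𝒜compact : IsCompact 𝒜)
    (h𝒜inv : ∀ t : ℝ, 0 ≤ t →
      (fun p : ell2 × S => ((U p.2 t 0 p.1, θ t p.2) : ell2 × S)) '' 𝒜 = 𝒜)
    (h𝒜attr : ∀ 𝓑 : Set (ell2 × S), Bornology.IsBounded 𝓑 → ∀ η : ℝ, 0 < η →
      ∃ T : ℝ, ∀ t ≥ T, ∀ p ∈ 𝓑,
        Metric.infDist ((U p.2 t 0 p.1, θ t p.2) : ell2 × S) 𝒜 ≤ η) :
    ∀ ε : ℝ, 0 < ε → ∃ 𝒜ε : S → Set ell2,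
      -- `A(σ) ⊆ 𝒜_ε(σ) ⊆ 𝒩_ε(σ)`
      (∀ σ : S, {u : ell2 | (u, σ) ∈ 𝒜} ⊆ 𝒜ε σ ∧
        𝒜ε σ ⊆ {u : ell2 | (u, σ) ∈ Metric.thickening ε 𝒜}) ∧
      -- forward invariance
      (∀ t : ℝ, 0 ≤ t → ∀ σ : S, ∀ u ∈ 𝒜ε σ, U σ t 0 u ∈ 𝒜ε (θ t σ)) ∧
      -- uniform forward attraction of every bounded set
      (∀ B : Set ell2, Bornology.IsBounded B → ∀ η : ℝ, 0 < η →
        ∃ T : ℝ, ∀ t ≥ T, ∀ σ : S, ∀ u ∈ B,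
          Metric.infDist (U σ t 0 u) (𝒜ε (θ t σ)) ≤ η) := by

  intro ε hε
  rcases 𝒜.eq_empty_or_nonempty with hemp | hne
  · -- degenerate case: empty attractor
    refine ⟨fun _ => ∅, ?_, ?_, ?_⟩
    · intro σ
      constructor
      · intro u hu; simp [hemp] at hu
      · intro u hu; simp at hu
    · intro t ht σ u hu; simp at hu
    · intro B hB η hη
      exact ⟨0, fun t ht σ u hu => by simp [Metric.infDist_empty]; linarith⟩
  · obtain ⟨T, hT⟩ := h𝒜attr (B₀ ×ˢ (Set.univ : Set S))
      (hB₀bdd.prod isCompact_univ.isBounded) (ε / 2) (by linarith)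
    set T' : ℝ := max T 0 with hT'def
    have hT'0 : (0 : ℝ) ≤ T' := le_max_right T 0
    refine ⟨fun σ => {u | (u, σ) ∈ 𝒜} ∪
      {v | ∃ t, T' ≤ t ∧ ∃ σ', θ t σ' = σ ∧ ∃ u ∈ B₀, v = U σ' t 0 u}, ?_, ?_, ?_⟩
    · intro σ
      refine ⟨fun u hu => Or.inl hu, ?_⟩
      rintro v (hv | ⟨t, ht, σ', hσ', u, huB, rfl⟩)
      · exact Metric.self_subset_thickening hε 𝒜 hv
      · have h1 := hT t (le_trans (le_max_left T 0) ht) (u, σ') ⟨huB, trivial⟩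
        have : (U σ' t 0 u, θ t σ') ∈ Metric.thickening ε 𝒜 := by
          rw [Metric.mem_thickening_iff_infDist_lt hne]
          calc Metric.infDist ((U σ' t 0 u, θ t σ') : ell2 × S) 𝒜 ≤ ε / 2 := h1
            _ < ε := by linarith
        rw [hσ'] at this
        exact this
    · rintro s hs σ u (hu | ⟨t, ht, σ', hσ', w, hwB, rfl⟩)
      · left
        show (U σ s 0 u, θ s σ) ∈ 𝒜
        rw [← h𝒜inv s hs]
        exact ⟨(u, σ), hu, rfl⟩
      · right
        have ht0 : (0 : ℝ) ≤ t := le_trans hT'0 ht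
        refine ⟨s + t, by linarith, σ', ?_, w, hwB, ?_⟩
        · rw [hθadd s t, Function.comp_apply, hσ']
        · have h1 : U σ' (s + t) (0 + t) = U (θ t σ') s 0 := hUtrans σ' t s 0 hs
          have h2 : U σ' (s + t) t ∘ U σ' t 0 = U σ' (s + t) 0 :=
            hUcomp σ' 0 t (s + t) ht0 (by linarith)
          rw [hσ'] at h1
          calc U σ s 0 (U σ' t 0 w) = U σ' (s + t) (0 + t) (U σ' t 0 w) := by rw [h1]
            _ = (U σ' (s + t) t ∘ U σ' t 0) w := by rw [zero_add]; rfl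
            _ = U σ' (s + t) 0 w := by rw [h2]
    · intro B hB η hη
      obtain ⟨t₀, ht₀0, habs⟩ := hB₀abs B hB
      refine ⟨t₀ + T', fun t ht σ u hu => ?_⟩
      have hwB : U σ t₀ 0 u ∈ B₀ := habs t₀ le_rfl σ u hu
      have hmem : U σ t 0 u ∈ {u | (u, θ t σ) ∈ 𝒜} ∪
          {v | ∃ t', T' ≤ t' ∧ ∃ σ', θ t' σ' = θ t σ ∧ ∃ w ∈ B₀, v = U σ' t' 0 w} := by
        right
        refine ⟨t - t₀, by linarith, θ t₀ σ, ?_, U σ t₀ 0 u, hwB, ?_⟩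
        · have := hθadd (t - t₀) t₀
          have h3 : θ (t - t₀ + t₀) σ = θ (t - t₀) (θ t₀ σ) := by
            rw [this]; rfl
          rw [← h3, sub_add_cancel]
        · have h1 : U σ (t - t₀ + t₀) (0 + t₀) = U (θ t₀ σ) (t - t₀) 0 :=
            hUtrans σ t₀ (t - t₀) 0 (by linarith)
          rw [sub_add_cancel, zero_add] at h1
          have h2 : U σ t t₀ ∘ U σ t₀ 0 = U σ t 0 :=
            hUcomp σ 0 t₀ t ht₀0 (by linarith)
          calc U σ t 0 u = (U σ t t₀ ∘ U σ t₀ 0) u := by rw [h2]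
            _ = U (θ t₀ σ) (t - t₀) 0 (U σ t₀ 0 u) := by rw [← h1]; rfl
      rw [Metric.infDist_zero_of_mem hmem]
      linarith
end
end

section
/- Assume (H1) and (H2), and let φ=(u,v,z) be a solution of the Gray–Scott lattice system on [t_0,∞) with symbol σ_0∈𝕋^κ. Set θ_1 = min{(3/2)λ − (μ−1/2)k, λ/2, (3/2)λ + ((μ/2−1)k)/μ²} and R_0² = λ‖a‖² + (2ακc_1²π²/(λ+k))‖b_1‖² + (2κc_2²π²/λ)‖b_2‖² + (2μακc_3²π²/(μλ+k))‖b_3‖². Then θ_1>0 and for all t≥t_0: α‖u(t)‖² + ‖v(t)‖² + α‖z(t)‖² ≤ e^{−θ_1(t−t_0)}(α‖u(t_0)‖² + ‖v(t_0)‖² + α‖z(t_0)‖²) + R_0²/θ_1. Consequently, with δ_1=min{1,α} and δ_2=max{1,α}, ‖φ(t)‖²_E ≤ (δ_2/δ_1) e^{−θ_1(t−t_0)} ‖φ(t_0)‖²_E + R_0²/(θ_1 δ_1) for all t≥t_0. -/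
noncomputable section

open scoped Real

/-- The phase space `E = ℓ² × ℓ² × ℓ²`. -/
abbrev GSE : Type := ell2 × ell2 × ell2

/-- The squared `E`-norm `‖(u,v,z)‖²_E = ‖u‖² + ‖v‖² + ‖z‖²`. -/
def enormSq (p : GSE) : ℝ := ‖p.1‖ ^ 2 + ‖p.2.1‖ ^ 2 + ‖p.2.2‖ ^ 2

/-- The `κ`-dimensional torus `𝕋^κ = (ℝ/2πℤ)^κ`. -/
abbrev Torus (κ : ℕ) : Type := Fin κ → AddCircle (2 * π)

/-- The distance on `𝕋^κ` induced from `ℝ^κ`: `‖σ₁ − σ₂‖_{𝕋^κ} = (Σ_i ‖σ₁ᵢ − σ₂ᵢ‖²)^{1/2}`. -/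
def tDist {κ : ℕ} (σ₁ σ₂ : Torus κ) : ℝ := Real.sqrt (∑ i, ‖σ₁ i - σ₂ i‖ ^ 2)

/-- The translation flow on the torus: `θ_t σ = (x t + σ) mod 𝕋^κ`. -/
def θtorus {κ : ℕ} (x : Fin κ → ℝ) (t : ℝ) (σ : Torus κ) : Torus κ :=
  fun i => ((t * x i : ℝ) : AddCircle (2 * π)) + σ i

/-- `φ : ℝ → E` is a solution of the nonautonomous discrete Gray–Scott system with
symbol `σ₀` (symbol path `σ(t) = θ_t σ₀`) and initial time `t₀`: it is continuous on
`[t₀,∞)`, continuously differentiable on `(t₀,∞)`, and satisfies, componentwise for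
every `m ∈ ℤ` and every `t > t₀`,
`u' = −d₁Au − (λ+k)u + u²v − αu³ + βz + b₁f₁(σ(t))`,
`v' = −d₂Av + λ(a−v) − u²v + αu³ + b₂f₂(σ(t))`,
`z' = −d₃Az + ku − (λ+β)z + b₃f₃(σ(t))`, where `(Aw)_m = 2w_m − w_{m+1} − w_{m−1}`. -/
def IsGSSolution {κ : ℕ} (d₁ d₂ d₃ k α β lam : ℝ) (a b₁ b₂ b₃ : ell2)
    (f₁ f₂ f₃ : ℤ → Torus κ → ℝ) (x : Fin κ → ℝ) (σ₀ : Torus κ) (t₀ : ℝ)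
    (φ : ℝ → GSE) : Prop :=
  ContinuousOn φ (Set.Ici t₀) ∧
  ∃ φ' : ℝ → GSE, ContinuousOn φ' (Set.Ioi t₀) ∧
    ∀ t ∈ Set.Ioi t₀,
      HasDerivAt φ (φ' t) t ∧
      ∀ m : ℤ,
        ((φ' t).1 m =
          -d₁ * (2 * (φ t).1 m - (φ t).1 (m + 1) - (φ t).1 (m - 1))
            - (lam + k) * (φ t).1 m + ((φ t).1 m) ^ 2 * (φ t).2.1 m
            - α * ((φ t).1 m) ^ 3 + β * (φ t).2.2 m
            + b₁ m * f₁ m (θtorus x t σ₀)) ∧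
        ((φ' t).2.1 m =
          -d₂ * (2 * (φ t).2.1 m - (φ t).2.1 (m + 1) - (φ t).2.1 (m - 1))
            + lam * (a m - (φ t).2.1 m) - ((φ t).1 m) ^ 2 * (φ t).2.1 m
            + α * ((φ t).1 m) ^ 3
            + b₂ m * f₂ m (θtorus x t σ₀)) ∧
        ((φ' t).2.2 m =
          -d₃ * (2 * (φ t).2.2 m - (φ t).2.2 (m + 1) - (φ t).2.2 (m - 1))
            + k * (φ t).1 m - (lam + β) * (φ t).2.2 m
            + b₃ m * f₃ m (θtorus x t σ₀))

/-!
The weighted energy `y = α‖u‖² + ‖v‖² + α‖z‖²` satisfies `y' ≤ −θ₁ y + R₀²`. In `y'` the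
diffusion contributes `−2d⟨w, Aw⟩ ≤ 0`, the cubic terms of the `u`- and `v`-equations combine to
`−2 ∑ u_m² (v_m − α u_m)² ≤ 0`, and the coupling `2α(β + k) u z` and the forcing terms are absorbed
by weighted Young inequalities (weight `μ = k/β` for the coupling). What remains is damping at
rate `θ₁`, positive by (H1), and a forcing bounded by `R₀²`, since `|f_{im}| ≤ c_i √κ π` on the
torus. Then `e^{θ₁ t} (y − R₀²/θ₁)` is nonincreasing, and
`min{1,α} ‖φ‖²_E ≤ y ≤ max{1,α} ‖φ‖²_E` transfers the decay to the `E`-norm.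
-/

open scoped RealInnerProductSpace
open Set

lemma two_mul_mul_le_half_mul_sq_add {ε : ℝ} (hε : 0 < ε) (x y : ℝ) :
    2 * x * y ≤ ε / 2 * x ^ 2 + 2 / ε * y ^ 2 := by
  have h : ε / 2 * x ^ 2 + 2 / ε * y ^ 2 - 2 * x * y = (ε * x - 2 * y) ^ 2 / (2 * ε) := by
    field_simp; ring
  nlinarith [div_nonneg (sq_nonneg (ε * x - 2 * y)) (by positivity : (0 : ℝ) ≤ 2 * ε)]

lemma summable_mul_of_summable_sq {ι : Type*} {f g : ι → ℝ} (hf : Summable fun i => f i ^ 2)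
    (hg : Summable fun i => g i ^ 2) : Summable fun i => f i * g i :=
  Summable.of_norm_bounded (hf.add hg) fun i => by
    rw [Real.norm_eq_abs, abs_mul]
    nlinarith [sq_nonneg (|f i| - |g i|), sq_abs (f i), sq_abs (g i)]

lemma exists_hasSum_mul_laplacian_nonneg {u : ℤ → ℝ} (hu : Summable fun m => u m ^ 2) :
    ∃ L, 0 ≤ L ∧ HasSum (fun m => u m * (2 * u m - u (m + 1) - u (m - 1))) L := by
  have hnext : HasSum (fun m : ℤ => u (m + 1) ^ 2) (∑' m, u m ^ 2) :=
    (Equiv.addRight (1 : ℤ)).hasSum_iff (f := fun m => u m ^ 2) |>.2 hu.hasSum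
  have hprev : HasSum (fun m : ℤ => u (m - 1) ^ 2) (∑' m, u m ^ 2) :=
    (Equiv.subRight (1 : ℤ)).hasSum_iff (f := fun m => u m ^ 2) |>.2 hu.hasSum
  have hsum : Summable fun m => u m * (2 * u m - u (m + 1) - u (m - 1)) := by
    refine (((hu.mul_left 2).sub (summable_mul_of_summable_sq hu hnext.summable)).sub
      (summable_mul_of_summable_sq hu hprev.summable)).congr fun m => ?_
    ring
  -- `u_m u_{m±1} ≤ (u_m² + u_{m±1}²)/2`, and the resulting lower bound sums to zero
  have hlower : HasSum (fun m => u m ^ 2 - u (m + 1) ^ 2 / 2 - u (m - 1) ^ 2 / 2) 0 := by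
    have h := (hu.hasSum.sub (hnext.div_const 2)).sub (hprev.div_const 2)
    rwa [show ∀ S : ℝ, S - S / 2 - S / 2 = 0 by intro; ring] at h
  refine ⟨_, hasSum_le (fun m => ?_) hlower hsum.hasSum, hsum.hasSum⟩
  nlinarith [sq_nonneg (u m - u (m + 1)), sq_nonneg (u m - u (m - 1))]

lemma ell2.hasSum_mul (u v : ell2) : HasSum (fun m => u m * v m) ⟪u, v⟫ := by
  simpa only [Real.inner_apply] using lp.hasSum_inner (𝕜 := ℝ) u v

lemma ell2.hasSum_sq (u : ell2) : HasSum (fun m => u m ^ 2) (‖u‖ ^ 2) := by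
  simpa [← sq, real_inner_self_eq_norm_sq] using ell2.hasSum_mul u u

lemma le_exp_mul_add_div_of_hasDerivAt_le {f f' : ℝ → ℝ} {a θ R : ℝ} (hθ : 0 < θ)
    (hR : 0 ≤ R) (hf : ContinuousOn f (Ici a)) (hf' : ∀ t ∈ Ioi a, HasDerivAt f (f' t) t)
    (hbound : ∀ t ∈ Ioi a, f' t ≤ -θ * f t + R) :
    ∀ t ≥ a, f t ≤ Real.exp (-θ * (t - a)) * f a + R / θ := by
  set g : ℝ → ℝ := fun s => Real.exp (θ * (s - a)) * (f s - R / θ)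
  have hg' : ∀ s ∈ Ioi a, HasDerivAt g
      (Real.exp (θ * (s - a)) * θ * (f s - R / θ) + Real.exp (θ * (s - a)) * f' s) s := by
    intro s hs
    have hexp : HasDerivAt (fun s => Real.exp (θ * (s - a))) (Real.exp (θ * (s - a)) * θ) s := by
      simpa using ((hasDerivAt_id s).sub_const a).const_mul θ |>.exp
    exact hexp.mul ((hf' s hs).sub_const _)
  have hanti : AntitoneOn g (Ici a) := by
    refine antitoneOn_of_hasDerivWithinAt_nonpos (convex_Ici a) (f' := fun s =>
      Real.exp (θ * (s - a)) * θ * (f s - R / θ) + Real.exp (θ * (s - a)) * f' s)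
      ((Real.continuous_exp.comp_continuousOn (by fun_prop)).mul (hf.sub continuousOn_const))
      (fun s hs => ?_) fun s hs => ?_ <;> rw [interior_Ici] at hs
    · exact (hg' s hs).hasDerivWithinAt
    · have : θ * (f s - R / θ) + f' s ≤ 0 := by
        rw [mul_sub, mul_div_cancel₀ _ hθ.ne']; linarith [hbound s hs]
      nlinarith [Real.exp_pos (θ * (s - a))]
  intro t ht
  have hgt : g t ≤ g a := hanti self_mem_Ici ht ht
  simp only [g, sub_self, mul_zero, Real.exp_zero, one_mul] at hgt
  have hsplit : Real.exp (-θ * (t - a)) * Real.exp (θ * (t - a)) = 1 := by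
    rw [← Real.exp_add, neg_mul, neg_add_cancel, Real.exp_zero]
  have hmul := mul_le_mul_of_nonneg_left hgt (Real.exp_pos (-θ * (t - a))).le
  rw [← mul_assoc, hsplit, one_mul] at hmul
  nlinarith [Real.exp_pos (-θ * (t - a)), div_nonneg hR hθ.le]

lemma grayScott_reaction_le {k α β lam θ μ : ℝ} (hk : 0 < k) (hα : 0 < α) (hβ : 0 < β)
    (hlam : 0 < lam) (hμ : 0 < μ) (hθu : θ ≤ 3 / 2 * (lam + k) - (k + β) * μ)
    (hθv : θ ≤ lam / 2) (hθz : θ ≤ 3 / 2 * (lam + β) - (k + β) / μ) (u v z a g₁ g₂ g₃ : ℝ) :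
    2 * α * u * (-(lam + k) * u + u ^ 2 * v - α * u ^ 3 + β * z + g₁)
        + 2 * v * (lam * (a - v) - u ^ 2 * v + α * u ^ 3 + g₂)
        + 2 * α * z * (k * u - (lam + β) * z + g₃)
      ≤ -θ * (α * u ^ 2 + v ^ 2 + α * z ^ 2) + lam * a ^ 2 + 2 * α / (lam + k) * g₁ ^ 2
        + 2 / lam * g₂ ^ 2 + 2 * α / (lam + β) * g₃ ^ 2 := by
  have hcross := two_mul_mul_le_half_mul_sq_add (by positivity : 0 < 2 * μ) u z
  have hg₁ := two_mul_mul_le_half_mul_sq_add (by positivity : 0 < lam + k) u g₁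
  have hg₂ := two_mul_mul_le_half_mul_sq_add hlam v g₂
  have hg₃ := two_mul_mul_le_half_mul_sq_add (by positivity : 0 < lam + β) z g₃
  have ha := two_mul_mul_le_half_mul_sq_add two_pos v a
  -- the cubic terms of `u` and `v` combine to `−2u²(v − αu)² ≤ 0`
  have hcubic : 0 ≤ 2 * (u * (v - α * u)) ^ 2 := by positivity
  linear_combination (α * (β + k)) * hcross + α * hg₁ + hg₂ + α * hg₃ + lam * ha + hcubic
    + α * u ^ 2 * hθu + v ^ 2 * hθv + α * z ^ 2 * hθz

lemma grayScott_energy_deriv_le {d₁ d₂ d₃ k α β lam θ μ G₁ G₂ G₃ : ℝ} (hd₁ : 0 ≤ d₁)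
    (hd₂ : 0 ≤ d₂) (hd₃ : 0 ≤ d₃) (hk : 0 < k) (hα : 0 < α) (hβ : 0 < β) (hlam : 0 < lam)
    (hμ : 0 < μ) (hθu : θ ≤ 3 / 2 * (lam + k) - (k + β) * μ) (hθv : θ ≤ lam / 2)
    (hθz : θ ≤ 3 / 2 * (lam + β) - (k + β) / μ) {u v z a u' v' z' : ell2} {g₁ g₂ g₃ : ℤ → ℝ}
    (hG₁ : HasSum (fun m => g₁ m ^ 2) G₁) (hG₂ : HasSum (fun m => g₂ m ^ 2) G₂)
    (hG₃ : HasSum (fun m => g₃ m ^ 2) G₃)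
    (hu' : ∀ m, u' m = -d₁ * (2 * u m - u (m + 1) - u (m - 1)) - (lam + k) * u m
        + u m ^ 2 * v m - α * u m ^ 3 + β * z m + g₁ m)
    (hv' : ∀ m, v' m = -d₂ * (2 * v m - v (m + 1) - v (m - 1)) + lam * (a m - v m)
        - u m ^ 2 * v m + α * u m ^ 3 + g₂ m)
    (hz' : ∀ m, z' m = -d₃ * (2 * z m - z (m + 1) - z (m - 1)) + k * u m
        - (lam + β) * z m + g₃ m) :
    2 * α * ⟪u, u'⟫ + 2 * ⟪v, v'⟫ + 2 * α * ⟪z, z'⟫ ≤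
      -θ * (α * ‖u‖ ^ 2 + ‖v‖ ^ 2 + α * ‖z‖ ^ 2) + lam * ‖a‖ ^ 2 + 2 * α / (lam + k) * G₁
        + 2 / lam * G₂ + 2 * α / (lam + β) * G₃ := by
  obtain ⟨Lu, hLu, hsumLu⟩ := exists_hasSum_mul_laplacian_nonneg (ell2.hasSum_sq u).summable
  obtain ⟨Lv, hLv, hsumLv⟩ := exists_hasSum_mul_laplacian_nonneg (ell2.hasSum_sq v).summable
  obtain ⟨Lz, hLz, hsumLz⟩ := exists_hasSum_mul_laplacian_nonneg (ell2.hasSum_sq z).summable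
  have hlhs := (((ell2.hasSum_mul u u').mul_left (2 * α)).add
    ((ell2.hasSum_mul v v').mul_left 2)).add ((ell2.hasSum_mul z z').mul_left (2 * α))
  have hrhs := (((((((((ell2.hasSum_sq u).mul_left α).add (ell2.hasSum_sq v)).add
    ((ell2.hasSum_sq z).mul_left α)).mul_left (-θ)).add ((ell2.hasSum_sq a).mul_left lam)).add
    (hG₁.mul_left (2 * α / (lam + k)))).add (hG₂.mul_left (2 / lam))).add
    (hG₃.mul_left (2 * α / (lam + β)))).sub ((((hsumLu.mul_left (2 * α * d₁)).add
    (hsumLv.mul_left (2 * d₂))).add (hsumLz.mul_left (2 * α * d₃))))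
  refine (hasSum_le (fun m => ?_) hlhs hrhs).trans ?_
  · simp only [hu' m, hv' m, hz' m]
    linear_combination grayScott_reaction_le hk hα hβ hlam hμ hθu hθv hθz
      (u m) (v m) (z m) (a m) (g₁ m) (g₂ m) (g₃ m)
  · have : 0 ≤ 2 * α * d₁ * Lu + 2 * d₂ * Lv + 2 * α * d₃ * Lz := by positivity
    linarith

lemma tDist_le_sqrt_mul_pi {κ : ℕ} (σ σ' : Torus κ) : tDist σ σ' ≤ √κ * π := by
  have hcoord : ∀ i, ‖σ i - σ' i‖ ^ 2 ≤ π ^ 2 := fun i => by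
    have h := AddCircle.norm_le_half_period (p := 2 * π) (x := σ i - σ' i) (by positivity)
    rw [abs_of_pos (by positivity), mul_div_cancel_left₀ _ two_ne_zero] at h
    exact pow_le_pow_left₀ (norm_nonneg _) h 2
  calc tDist σ σ' ≤ √(∑ _i : Fin κ, π ^ 2) :=
        Real.sqrt_le_sqrt (Finset.sum_le_sum fun i _ => hcoord i)
    _ = √κ * π := by
      rw [Finset.sum_const, Finset.card_univ, Fintype.card_fin, nsmul_eq_mul,
        Real.sqrt_mul (Nat.cast_nonneg κ), Real.sqrt_sq Real.pi_pos.le]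

lemma exists_hasSum_sq_mul_le_of_torusLipschitz {κ : ℕ} (b : ell2) {f : ℤ → Torus κ → ℝ} {c : ℝ}
    (hc : 0 ≤ c) (hf0 : ∀ m, f m 0 = 0) (hf : ∀ m σ σ', |f m σ - f m σ'| ≤ c * tDist σ σ')
    (σ : Torus κ) :
    ∃ G, HasSum (fun m => (b m * f m σ) ^ 2) G ∧ G ≤ c ^ 2 * κ * π ^ 2 * ‖b‖ ^ 2 := by
  have hpt : ∀ m, (b m * f m σ) ^ 2 ≤ c ^ 2 * κ * π ^ 2 * b m ^ 2 := fun m => by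
    have habs : |f m σ| ≤ c * (√κ * π) := by
      simpa [hf0 m] using
        (hf m σ 0).trans (mul_le_mul_of_nonneg_left (tDist_le_sqrt_mul_pi σ 0) hc)
    have hsq : f m σ ^ 2 ≤ c ^ 2 * κ * π ^ 2 := by
      calc f m σ ^ 2 = |f m σ| ^ 2 := (sq_abs _).symm
        _ ≤ (c * (√κ * π)) ^ 2 := pow_le_pow_left₀ (abs_nonneg _) habs 2
        _ = c ^ 2 * κ * π ^ 2 := by rw [mul_pow, mul_pow, Real.sq_sqrt (Nat.cast_nonneg κ)]; ring
    rw [mul_pow, mul_comm]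
    exact mul_le_mul_of_nonneg_right hsq (sq_nonneg _)
  have hb := (ell2.hasSum_sq b).mul_left (c ^ 2 * κ * π ^ 2)
  have hsum := Summable.of_nonneg_of_le (fun m => sq_nonneg _) hpt hb.summable
  exact ⟨_, hsum.hasSum, hasSum_le hpt hsum.hasSum hb⟩

def weightedEnergy (α : ℝ) (p : GSE) : ℝ := α * ‖p.1‖ ^ 2 + ‖p.2.1‖ ^ 2 + α * ‖p.2.2‖ ^ 2

lemma continuous_weightedEnergy (α : ℝ) : Continuous (weightedEnergy α) := by
  unfold weightedEnergy; fun_prop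

lemma HasDerivAt.weightedEnergy {α t : ℝ} {φ : ℝ → GSE} {φ' : GSE} (h : HasDerivAt φ φ' t) :
    HasDerivAt (fun s => weightedEnergy α (φ s))
      (2 * α * ⟪(φ t).1, φ'.1⟫ + 2 * ⟪(φ t).2.1, φ'.2.1⟫ + 2 * α * ⟪(φ t).2.2, φ'.2.2⟫) t := by
  have h₂₃ : HasDerivAt (fun s => (φ s).2) φ'.2 t :=
    (ContinuousLinearMap.snd ℝ ell2 (ell2 × ell2)).hasFDerivAt.comp_hasDerivAt t h
  have h₁ : HasDerivAt (fun s => (φ s).1) φ'.1 t :=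
    (ContinuousLinearMap.fst ℝ ell2 (ell2 × ell2)).hasFDerivAt.comp_hasDerivAt t h
  have h₂ : HasDerivAt (fun s => (φ s).2.1) φ'.2.1 t :=
    (ContinuousLinearMap.fst ℝ ell2 ell2).hasFDerivAt.comp_hasDerivAt t h₂₃
  have h₃ : HasDerivAt (fun s => (φ s).2.2) φ'.2.2 t :=
    (ContinuousLinearMap.snd ℝ ell2 ell2).hasFDerivAt.comp_hasDerivAt t h₂₃
  exact (((h₁.norm_sq.const_mul α).add h₂.norm_sq).add (h₃.norm_sq.const_mul α)).congr_deriv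
    (by ring)

lemma min_one_mul_enormSq_le_weightedEnergy (α : ℝ) (p : GSE) :
    min 1 α * enormSq p ≤ weightedEnergy α p := by
  unfold enormSq weightedEnergy
  have h₁ := mul_le_mul_of_nonneg_right (min_le_right 1 α) (sq_nonneg ‖p.1‖)
  have h₂ := mul_le_mul_of_nonneg_right (min_le_left 1 α) (sq_nonneg ‖p.2.1‖)
  have h₃ := mul_le_mul_of_nonneg_right (min_le_right 1 α) (sq_nonneg ‖p.2.2‖)
  linarith

lemma weightedEnergy_le_max_one_mul_enormSq (α : ℝ) (p : GSE) :
    weightedEnergy α p ≤ max 1 α * enormSq p := by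
  unfold enormSq weightedEnergy
  have h₁ := mul_le_mul_of_nonneg_right (le_max_right 1 α) (sq_nonneg ‖p.1‖)
  have h₂ := mul_le_mul_of_nonneg_right (le_max_left 1 α) (sq_nonneg ‖p.2.1‖)
  have h₃ := mul_le_mul_of_nonneg_right (le_max_right 1 α) (sq_nonneg ‖p.2.2‖)
  linarith

lemma enormSq_le_of_weightedEnergy_le {α c R : ℝ} (hα : 0 < α) (hc : 0 ≤ c) {p q : GSE}
    (h : weightedEnergy α p ≤ c * weightedEnergy α q + R) :
    enormSq p ≤ max 1 α / min 1 α * c * enormSq q + R / min 1 α := by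
  have hmin : 0 < min 1 α := lt_min one_pos hα
  have hchain : min 1 α * enormSq p ≤ c * (max 1 α * enormSq q) + R :=
    (min_one_mul_enormSq_le_weightedEnergy α p).trans <| h.trans <| by
      gcongr; exact weightedEnergy_le_max_one_mul_enormSq α q
  rw [← le_div_iff₀' hmin] at hchain
  exact hchain.trans_eq (by field_simp)

lemma grayScott_rate_pos {k β lam : ℝ} (hk : 0 < k) (hβ : 0 < β) (hlam : 0 < lam)
    (h2β : 2 * β < k) (hk3 : k < 3 * lam / (2 * (k / β) - 1)) :
    0 < min (3 / 2 * lam - (k / β - 1 / 2) * k)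
      (min (lam / 2) (3 / 2 * lam + ((k / β) / 2 - 1) * k / (k / β) ^ 2)) := by
  have hμ : 2 < k / β := by rw [lt_div_iff₀ hβ]; linarith
  have hu : (2 * (k / β) - 1) * k < 3 * lam := (lt_div_iff₀' (by linarith)).1 hk3
  have hz : 0 ≤ ((k / β) / 2 - 1) * k / (k / β) ^ 2 := by
    have : 0 ≤ (k / β) / 2 - 1 := by linarith
    positivity
  exact lt_min (by linarith) (lt_min (by linarith) (by linarith))

lemma grayScott_rate_le {k β lam θ : ℝ} (hk : k ≠ 0) (hβ : β ≠ 0)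
    (hθ : θ = min (3 / 2 * lam - (k / β - 1 / 2) * k)
      (min (lam / 2) (3 / 2 * lam + ((k / β) / 2 - 1) * k / (k / β) ^ 2))) :
    θ ≤ 3 / 2 * (lam + k) - (k + β) * (k / β) ∧ θ ≤ lam / 2 ∧
      θ ≤ 3 / 2 * (lam + β) - (k + β) / (k / β) := by
  have hu : 3 / 2 * (lam + k) - (k + β) * (k / β) = 3 / 2 * lam - (k / β - 1 / 2) * k := by
    field_simp; ring
  have hz : 3 / 2 * (lam + β) - (k + β) / (k / β)
      = 3 / 2 * lam + ((k / β) / 2 - 1) * k / (k / β) ^ 2 := by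
    field_simp; ring
  rw [hu, hz, hθ]
  exact ⟨min_le_left _ _, (min_le_right _ _).trans (min_le_left _ _),
    (min_le_right _ _).trans (min_le_right _ _)⟩

lemma IsGSSolution.exists_hasDerivAt_weightedEnergy_le {κ : ℕ}
    {d₁ d₂ d₃ k α β lam θ μ c₁ c₂ c₃ t₀ : ℝ} {a b₁ b₂ b₃ : ell2} {f₁ f₂ f₃ : ℤ → Torus κ → ℝ}
    {x : Fin κ → ℝ} {σ₀ : Torus κ} {φ : ℝ → GSE}
    (hφ : IsGSSolution d₁ d₂ d₃ k α β lam a b₁ b₂ b₃ f₁ f₂ f₃ x σ₀ t₀ φ)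
    (hd₁ : 0 ≤ d₁) (hd₂ : 0 ≤ d₂) (hd₃ : 0 ≤ d₃) (hk : 0 < k) (hα : 0 < α) (hβ : 0 < β)
    (hlam : 0 < lam) (hμ : 0 < μ) (hθu : θ ≤ 3 / 2 * (lam + k) - (k + β) * μ)
    (hθv : θ ≤ lam / 2) (hθz : θ ≤ 3 / 2 * (lam + β) - (k + β) / μ)
    (hc₁ : 0 ≤ c₁) (hc₂ : 0 ≤ c₂) (hc₃ : 0 ≤ c₃)
    (hf₁0 : ∀ m, f₁ m 0 = 0) (hf₂0 : ∀ m, f₂ m 0 = 0) (hf₃0 : ∀ m, f₃ m 0 = 0)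
    (hf₁lip : ∀ m σ σ', |f₁ m σ - f₁ m σ'| ≤ c₁ * tDist σ σ')
    (hf₂lip : ∀ m σ σ', |f₂ m σ - f₂ m σ'| ≤ c₂ * tDist σ σ')
    (hf₃lip : ∀ m σ σ', |f₃ m σ - f₃ m σ'| ≤ c₃ * tDist σ σ') :
    ∀ t ∈ Ioi t₀, ∃ D, HasDerivAt (fun s => weightedEnergy α (φ s)) D t ∧
      D ≤ -θ * weightedEnergy α (φ t) + (lam * ‖a‖ ^ 2
        + 2 * α / (lam + k) * (c₁ ^ 2 * κ * π ^ 2 * ‖b₁‖ ^ 2)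
        + 2 / lam * (c₂ ^ 2 * κ * π ^ 2 * ‖b₂‖ ^ 2)
        + 2 * α / (lam + β) * (c₃ ^ 2 * κ * π ^ 2 * ‖b₃‖ ^ 2)) := by
  intro t ht
  obtain ⟨-, φ', -, hsol⟩ := hφ
  obtain ⟨hderiv, hode⟩ := hsol t ht
  set σ := θtorus x t σ₀
  obtain ⟨G₁, hG₁, hG₁le⟩ := exists_hasSum_sq_mul_le_of_torusLipschitz b₁ hc₁ hf₁0 hf₁lip σ
  obtain ⟨G₂, hG₂, hG₂le⟩ := exists_hasSum_sq_mul_le_of_torusLipschitz b₂ hc₂ hf₂0 hf₂lip σ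
  obtain ⟨G₃, hG₃, hG₃le⟩ := exists_hasSum_sq_mul_le_of_torusLipschitz b₃ hc₃ hf₃0 hf₃lip σ
  refine ⟨_, hderiv.weightedEnergy, ?_⟩
  have henergy := grayScott_energy_deriv_le hd₁ hd₂ hd₃ hk hα hβ hlam hμ hθu hθv hθz hG₁ hG₂ hG₃
    (fun m => (hode m).1) (fun m => (hode m).2.1) (fun m => (hode m).2.2)
  have h₁ := mul_le_mul_of_nonneg_left hG₁le (by positivity : 0 ≤ 2 * α / (lam + k))
  have h₂ := mul_le_mul_of_nonneg_left hG₂le (by positivity : 0 ≤ 2 / lam)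
  have h₃ := mul_le_mul_of_nonneg_left hG₃le (by positivity : 0 ≤ 2 * α / (lam + β))
  unfold weightedEnergy
  linarith

/-- Under (H1)–(H2), every solution `φ = (u,v,z)` of the Gray–Scott
lattice system satisfies, with `θ₁ = min{(3/2)λ−(μ−1/2)k, λ/2, (3/2)λ+((μ/2−1)k)/μ²}`
(`μ = k/β`) and `R₀²` as below: `θ₁ > 0` and for all `t ≥ t₀`,
`α‖u(t)‖² + ‖v(t)‖² + α‖z(t)‖² ≤ e^{−θ₁(t−t₀)}(α‖u(t₀)‖² + ‖v(t₀)‖² + α‖z(t₀)‖²) + R₀²/θ₁`;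
consequently `‖φ(t)‖²_E ≤ (δ₂/δ₁)e^{−θ₁(t−t₀)}‖φ(t₀)‖²_E + R₀²/(θ₁δ₁)` with
`δ₁ = min{1,α}`, `δ₂ = max{1,α}`. -/
theorem stmt_9
    {κ : ℕ} (d₁ d₂ d₃ k α β lam : ℝ)
    (hd₁ : 0 < d₁) (hd₂ : 0 < d₂) (hd₃ : 0 < d₃)
    (hk : 0 < k) (hα : 0 < α) (hβ : 0 < β) (hlam : 0 < lam)
    (a b₁ b₂ b₃ : ell2)
    -- (H1): `2β < k < min{3λ/(2μ−1), β+λ}` where `μ = k/β`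
    (hH1a : 2 * β < k)
    (hH1b : k < min (3 * lam / (2 * (k / β) - 1)) (β + lam))
    (f₁ f₂ f₃ : ℤ → Torus κ → ℝ) (c₁ c₂ c₃ : ℝ)
    (hc₁ : 0 < c₁) (hc₂ : 0 < c₂) (hc₃ : 0 < c₃)
    -- (H2): `f_{im}(0) = 0` and `f_{im}` is `c_i`-Lipschitz on `𝕋^κ`
    (hf₁0 : ∀ m, f₁ m 0 = 0) (hf₂0 : ∀ m, f₂ m 0 = 0) (hf₃0 : ∀ m, f₃ m 0 = 0)
    (hf₁lip : ∀ m σ σ', |f₁ m σ - f₁ m σ'| ≤ c₁ * tDist σ σ')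
    (hf₂lip : ∀ m σ σ', |f₂ m σ - f₂ m σ'| ≤ c₂ * tDist σ σ')
    (hf₃lip : ∀ m σ σ', |f₃ m σ - f₃ m σ'| ≤ c₃ * tDist σ σ')
    (x : Fin κ → ℝ)
    -- the constants `θ₁` and `R₀²` (with `μ = k/β`)
    (θ₁ : ℝ)
    (hθ₁ : θ₁ = min (3 / 2 * lam - (k / β - 1 / 2) * k)
        (min (lam / 2) (3 / 2 * lam + ((k / β) / 2 - 1) * k / (k / β) ^ 2)))
    (R₀sq : ℝ)
    (hR₀sq : R₀sq = lam * ‖a‖ ^ 2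
        + (2 * α * κ * c₁ ^ 2 * π ^ 2 / (lam + k)) * ‖b₁‖ ^ 2
        + (2 * κ * c₂ ^ 2 * π ^ 2 / lam) * ‖b₂‖ ^ 2
        + (2 * (k / β) * α * κ * c₃ ^ 2 * π ^ 2 / ((k / β) * lam + k)) * ‖b₃‖ ^ 2)
    (t₀ : ℝ) (σ₀ : Torus κ) (φ : ℝ → GSE)
    (hφ : IsGSSolution d₁ d₂ d₃ k α β lam a b₁ b₂ b₃ f₁ f₂ f₃ x σ₀ t₀ φ) :
    0 < θ₁ ∧
    (∀ t ≥ t₀,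
      α * ‖(φ t).1‖ ^ 2 + ‖(φ t).2.1‖ ^ 2 + α * ‖(φ t).2.2‖ ^ 2 ≤
        Real.exp (-θ₁ * (t - t₀)) *
            (α * ‖(φ t₀).1‖ ^ 2 + ‖(φ t₀).2.1‖ ^ 2 + α * ‖(φ t₀).2.2‖ ^ 2)
          + R₀sq / θ₁) ∧
    (∀ t ≥ t₀,
      enormSq (φ t) ≤
        max 1 α / min 1 α * Real.exp (-θ₁ * (t - t₀)) * enormSq (φ t₀)
          + R₀sq / (θ₁ * min 1 α)) := by
  have hθ₁pos : 0 < θ₁ := hθ₁ ▸ grayScott_rate_pos hk hβ hlam hH1a (lt_min_iff.1 hH1b).1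
  obtain ⟨hθu, hθv, hθz⟩ := grayScott_rate_le hk.ne' hβ.ne' hθ₁
  have hR₀ : lam * ‖a‖ ^ 2 + 2 * α / (lam + k) * (c₁ ^ 2 * κ * π ^ 2 * ‖b₁‖ ^ 2)
      + 2 / lam * (c₂ ^ 2 * κ * π ^ 2 * ‖b₂‖ ^ 2)
      + 2 * α / (lam + β) * (c₃ ^ 2 * κ * π ^ 2 * ‖b₃‖ ^ 2) = R₀sq := by
    rw [hR₀sq]; field_simp
  choose! D hD hDle using hφ.exists_hasDerivAt_weightedEnergy_le hd₁.le hd₂.le hd₃.le hk hα hβ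
    hlam (div_pos hk hβ) hθu hθv hθz hc₁.le hc₂.le hc₃.le hf₁0 hf₂0 hf₃0 hf₁lip hf₂lip hf₃lip
  have hdecay := le_exp_mul_add_div_of_hasDerivAt_le
    (f := fun s => weightedEnergy α (φ s)) (R := R₀sq) hθ₁pos (by rw [← hR₀]; positivity)
    ((continuous_weightedEnergy α).comp_continuousOn hφ.1) hD
    fun t ht => (hDle t ht).trans_eq (by rw [hR₀])
  refine ⟨hθ₁pos, hdecay, fun t ht => ?_⟩
  exact (enormSq_le_of_weightedEnergy_le hα (Real.exp_pos _).le (hdecay t ht)).trans_eq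
    (by rw [div_div])
end
end

section
/- Let ℓ² be the Hilbert space of square-summable real sequences on ℤ and B the operator (Bu)_m = u_{m+1} − u_m. Let χ:[0,∞)→[0,1] be continuously differentiable with |χ'(x)| ≤ χ_0 for all x≥0, and let M be a positive integer. For u∈ℓ² define p∈ℓ² by p_m = χ(|m|/M) u_m. Then (Bu, Bp) ≥ Σ_{m∈ℤ} χ(|m|/M) |(Bu)_m|² − (2χ_0/M)‖u‖². -/
/-!
Writing `p = c u` with the weight `c m = χ(|m|/M)`, the discrete product rule gives
`(Bu)_m (Bp)_m = c_m (Bu)_m² + (Bc)_m (Bu)_m u_{m+1}`.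
Since `χ` is `χ₀`-Lipschitz and `||m+1| - |m|| ≤ 1`, we have `|(Bc)_m| ≤ χ₀/M`, and
`|(Bu)_m u_{m+1}| ≤ (3/2) u_{m+1}² + (1/2) u_m²`; summing over `m ∈ ℤ`, the error term is
at least `-(2χ₀/M)‖u‖²`.
-/

noncomputable section

/-- `(Bu)_m = u_{m+1} − u_m`. -/
def opB (u : ℤ → ℝ) : ℤ → ℝ := fun m => u (m + 1) - u m

open Set

theorem opB_mul (c u : ℤ → ℝ) (m : ℤ) :
    opB (c * u) m = c m * opB u m + opB c m * u (m + 1) := by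
  simp only [opB, Pi.mul_apply]
  ring

theorem abs_sub_mul_self_le (a b : ℝ) : |(b - a) * b| ≤ 3 / 2 * b ^ 2 + 1 / 2 * a ^ 2 := by
  rw [abs_le]
  constructor <;> nlinarith [sq_nonneg (a + b), sq_nonneg (a - b)]

theorem Memℓp.summable_sq {α : Type*} {u : α → ℝ} (hu : Memℓp u 2) :
    Summable fun i => u i ^ 2 := by
  simpa using hu.summable (by norm_num)

theorem abs_opB_mul_opB_mul_le {c u : ℤ → ℝ} {m : ℤ} {L : ℝ} (hc : |opB c m| ≤ L) :
    |opB c m * (opB u m * u (m + 1))| ≤ L * (3 / 2 * u (m + 1) ^ 2 + 1 / 2 * u m ^ 2) := by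
  rw [abs_mul]
  exact mul_le_mul hc (abs_sub_mul_self_le _ _) (abs_nonneg _) ((abs_nonneg _).trans hc)

section SquareSummable

variable {u : ℤ → ℝ} (hu : Summable fun m => u m ^ 2)
include hu

theorem summable_sq_add_one : Summable fun m => u (m + 1) ^ 2 :=
  (Equiv.addRight (1 : ℤ)).summable_iff.mpr hu

theorem summable_opB_sq : Summable fun m => opB u m ^ 2 := by
  refine .of_nonneg_of_le (fun m => sq_nonneg _) (fun m => ?_)
    (((summable_sq_add_one hu).mul_left 2).add (hu.mul_left 2))
  simp only [opB]
  nlinarith [sq_nonneg (u (m + 1) + u m)]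

theorem summable_opB_mul_opB_mul {c : ℤ → ℝ} {L : ℝ} (hc : ∀ m, |opB c m| ≤ L) :
    Summable fun m => opB c m * (opB u m * u (m + 1)) :=
  ((((summable_sq_add_one hu).mul_left _).add (hu.mul_left _)).mul_left L).of_norm_bounded
    fun m => abs_opB_mul_opB_mul_le (hc m)

theorem neg_le_tsum_opB_mul_opB_mul {c : ℤ → ℝ} {L : ℝ} (hc : ∀ m, |opB c m| ≤ L) :
    -(2 * L * ∑' m, u m ^ 2) ≤ ∑' m, opB c m * (opB u m * u (m + 1)) := by
  set g : ℤ → ℝ := fun m => L * (3 / 2 * u (m + 1) ^ 2 + 1 / 2 * u m ^ 2)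
  have hg : Summable g :=
    (((summable_sq_add_one hu).mul_left _).add (hu.mul_left _)).mul_left L
  have htsum_g : ∑' m, g m = 2 * L * ∑' m, u m ^ 2 := by
    have hshift : ∑' m, u (m + 1) ^ 2 = ∑' m, u m ^ 2 :=
      (Equiv.addRight (1 : ℤ)).tsum_eq (fun m => u m ^ 2)
    simp only [g, tsum_mul_left,
      ((summable_sq_add_one hu).mul_left _).tsum_add (hu.mul_left _), hshift]
    ring
  rw [← htsum_g, ← tsum_neg]
  exact hg.neg.tsum_le_tsum (fun m => neg_le_of_abs_le (abs_opB_mul_opB_mul_le (hc m)))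
    (summable_opB_mul_opB_mul hu hc)

theorem tsum_opB_mul_opB_mul_ge {c : ℤ → ℝ} {K L : ℝ} (hcK : ∀ m, |c m| ≤ K)
    (hcL : ∀ m, |opB c m| ≤ L) :
    ∑' m, c m * opB u m ^ 2 - 2 * L * ∑' m, u m ^ 2 ≤ ∑' m, opB u m * opB (c * u) m := by
  have hmain : Summable fun m => c m * opB u m ^ 2 :=
    ((summable_opB_sq hu).mul_left K).of_norm_bounded fun m => by
      rw [Real.norm_eq_abs, abs_mul, abs_sq]
      exact mul_le_mul_of_nonneg_right (hcK m) (sq_nonneg _)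
  have hsplit : ∀ m, opB u m * opB (c * u) m
      = c m * opB u m ^ 2 + opB c m * (opB u m * u (m + 1)) := fun m => by
    rw [opB_mul]; ring
  rw [tsum_congr hsplit, hmain.tsum_add (summable_opB_mul_opB_mul hu hcL)]
  linarith [neg_le_tsum_opB_mul_opB_mul hu hcL]

end SquareSummable

theorem abs_opB_comp_abs_div_le {χ χ' : ℝ → ℝ} {χ₀ : ℝ}
    (hderiv : ∀ x : ℝ, 0 ≤ x → HasDerivAt χ (χ' x) x) (hbound : ∀ x : ℝ, 0 ≤ x → |χ' x| ≤ χ₀)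
    (M : ℕ) (m : ℤ) :
    |opB (fun n : ℤ => χ ((|n| : ℤ) / (M : ℝ))) m| ≤ χ₀ / M := by
  have hχ₀ : 0 ≤ χ₀ := (abs_nonneg _).trans (hbound 0 le_rfl)
  have hlip := (convex_Ici (0 : ℝ)).norm_image_sub_le_of_norm_hasDerivWithin_le
    (fun x hx => (hderiv x hx).hasDerivWithinAt) hbound
    (mem_Ici.mpr (by positivity : (0 : ℝ) ≤ ((|m| : ℤ) : ℝ) / M))
    (mem_Ici.mpr (by positivity : (0 : ℝ) ≤ ((|m + 1| : ℤ) : ℝ) / M))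
  have hstep : |((|m + 1| : ℤ) : ℝ) / M - ((|m| : ℤ) : ℝ) / M| ≤ 1 / M := by
    rw [div_sub_div_same, abs_div, Nat.abs_cast]
    gcongr
    exact_mod_cast (abs_abs_sub_abs_le_abs_sub (m + 1) m).trans_eq (by simp)
  calc |opB (fun n : ℤ => χ ((|n| : ℤ) / (M : ℝ))) m|
      ≤ χ₀ * |((|m + 1| : ℤ) : ℝ) / M - ((|m| : ℤ) : ℝ) / M| := hlip
    _ ≤ χ₀ * (1 / M) := by gcongr
    _ = χ₀ / M := mul_one_div _ _

theorem stmt_13_general (u : ℤ → ℝ) (hu : Memℓp u 2)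
    (χ χ' : ℝ → ℝ) (χ₀ : ℝ)
    (hderiv : ∀ x : ℝ, 0 ≤ x → HasDerivAt χ (χ' x) x)
    (hχrange : ∀ x : ℝ, 0 ≤ x → χ x ∈ Set.Icc (0 : ℝ) 1)
    (hχ'bdd : ∀ x : ℝ, 0 ≤ x → |χ' x| ≤ χ₀)
    (M : ℕ)
    (p : ℤ → ℝ) (hp : ∀ m : ℤ, p m = χ ((|m| : ℤ) / (M : ℝ)) * u m) :
    (∑' m : ℤ, opB u m * opB p m) ≥
      (∑' m : ℤ, χ ((|m| : ℤ) / (M : ℝ)) * (opB u m) ^ 2)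
        - (2 * χ₀ / M) * ∑' m : ℤ, (u m) ^ 2 := by
  have hp_eq : p = (fun m : ℤ => χ ((|m| : ℤ) / (M : ℝ))) * u := funext hp
  have hweight : ∀ m : ℤ, |χ ((|m| : ℤ) / (M : ℝ))| ≤ 1 := fun m => by
    obtain ⟨h0, h1⟩ := hχrange ((|m| : ℤ) / (M : ℝ)) (by positivity)
    exact abs_le.mpr ⟨by linarith, h1⟩
  rw [hp_eq, ge_iff_le, mul_div_assoc]
  exact tsum_opB_mul_opB_mul_ge hu.summable_sq hweight (abs_opB_comp_abs_div_le hderiv hχ'bdd M)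

/-- Let `u ∈ ℓ²`, `χ : [0,∞) → [0,1]` continuously differentiable
with `|χ'(x)| ≤ χ₀` for all `x ≥ 0`, `M` a positive integer, and define `p ∈ ℓ²` by
`p_m = χ(|m|/M)u_m`.  Then
`(Bu, Bp) ≥ Σ_{m∈ℤ} χ(|m|/M)|(Bu)_m|² − (2χ₀/M)‖u‖²`. -/
theorem stmt_13 (u : ℤ → ℝ) (hu : Memℓp u 2)
    (χ χ' : ℝ → ℝ) (χ₀ : ℝ)
    (hderiv : ∀ x : ℝ, 0 ≤ x → HasDerivAt χ (χ' x) x)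
    (hχ'cont : ContinuousOn χ' (Set.Ici 0))
    (hχrange : ∀ x : ℝ, 0 ≤ x → χ x ∈ Set.Icc (0 : ℝ) 1)
    (hχ'bdd : ∀ x : ℝ, 0 ≤ x → |χ' x| ≤ χ₀)
    (M : ℕ) (hM : 0 < M)
    (p : ℤ → ℝ) (hp : ∀ m : ℤ, p m = χ ((|m| : ℤ) / (M : ℝ)) * u m) :
    (∑' m : ℤ, opB u m * opB p m) ≥
      (∑' m : ℤ, χ ((|m| : ℤ) / (M : ℝ)) * (opB u m) ^ 2)
        - (2 * χ₀ / M) * ∑' m : ℤ, (u m) ^ 2 :=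
  stmt_13_general u hu χ χ' χ₀ hderiv hχrange hχ'bdd M p hp
end
end
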